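/- Assume Σ_{n=2}^∞ Ξ(n)·aₙ ≤ (A−B)(1−γ), and let r₁ = inf_{n≥2} [ (Ξ(n)/((A−B)(1−γ))) · (1−ψ)/(μn−ψ) ]^{1/(μn−1)}. Then F_μ is starlike of order ψ in |z| < r₁: for every z ∈ 𝕌* with 0 < |z| < r₁ one has F_μ(z) ≠ 0 and Re( z·F_μ′(z) / F_μ(z) ) > ψ. -/

import Mathlib

/-!
Write `F(z) = z(1 − P)` and `zF′(z) = z(1 − Q)` with `P = Σ aₙ z^{Nₙ−1}`, `Q = Σ Nₙ aₙ z^{Nₙ−1}`,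
`Nₙ = μ(n+2)`. With `p = Σ aₙ rᴺⁿ⁻¹` and `q = Σ Nₙ aₙ rᴺⁿ⁻¹` (`r = |z|`) one has `|P| ≤ p`,
`|Q − P| ≤ q − p`, hence `|zF′/F − 1| ≤ (q − p)/(1 − p)`, which is `< 1 − ψ` exactly when
`Σ (Nₙ − ψ) aₙ rᴺⁿ⁻¹ < 1 − ψ`. Below the radius `r₁` each term satisfies
`(Nₙ − ψ) rᴺⁿ⁻¹ < (1 − ψ) Ξ(n)/((A−B)(1−γ))`, so this sum is dominated by the coefficient
inequality, strictly unless all `aₙ` vanish.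
-/

open Complex

/-- `Ξ(n) = (1−B)((μn)^k ϑₙ − (μn)^m λₙ) + (A−B)(1−γ)(μn)^m λₙ`. -/
noncomputable def Xi (μ A B γ : ℝ) (k m : ℕ) (ϑ lam : ℕ → ℝ) (n : ℕ) : ℝ :=
  (1 - B) * ((μ * n) ^ k * ϑ n - (μ * n) ^ m * lam n) +
    (A - B) * (1 - γ) * ((μ * n) ^ m * lam n)

/-- `Fneg μ a z = z − Σ_{n≥2} aₙ z^{μn}` (principal powers). -/
noncomputable def Fneg (μ : ℝ) (a : ℕ → ℝ) (z : ℂ) : ℂ :=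
  z - ∑' n : ℕ, (a (n + 2) : ℂ) * z ^ ((μ * (n + 2 : ℕ) : ℝ) : ℂ)

/-- Termwise derivative series `F_μ′(z) = 1 − Σ_{n≥2} μn·aₙ z^{μn−1}`. -/
noncomputable def Fder (μ : ℝ) (a : ℕ → ℝ) (z : ℂ) : ℂ :=
  1 - ∑' n : ℕ, ((μ * (n + 2 : ℕ) * a (n + 2) : ℝ) : ℂ) *
    z ^ ((μ * (n + 2 : ℕ) - 1 : ℝ) : ℂ)

theorem lt_re_div_of_norm_sub_le {P Q : ℂ} {p q ψ : ℝ} (hψ : ψ < 1) (hP : ‖P‖ ≤ p)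
    (hQP : ‖Q - P‖ ≤ q - p) (hpq : q - ψ * p < 1 - ψ) :
    1 - P ≠ 0 ∧ ψ < ((1 - Q) / (1 - P)).re := by
  have hp1 : p < 1 := by nlinarith [norm_nonneg (Q - P)]
  have hlow : 1 - p ≤ ‖1 - P‖ := by
    linarith [norm_sub_norm_le (1 : ℂ) P, norm_one (α := ℂ)]
  have hP1 : 1 - P ≠ 0 := norm_pos_iff.1 (by linarith)
  have hsmall : ‖(Q - P) / (1 - P)‖ < 1 - ψ := by
    rw [norm_div, div_lt_iff₀ (norm_pos_iff.2 hP1)]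
    nlinarith
  have hsplit : (1 - Q) / (1 - P) = 1 - (Q - P) / (1 - P) := by
    field_simp
    ring
  refine ⟨hP1, ?_⟩
  rw [hsplit, sub_re, one_re]
  linarith [re_le_norm ((Q - P) / (1 - P))]

section RealExponentSeries

variable {z : ℂ}

theorem norm_ofReal_mul_cpow (c t : ℝ) (z : ℂ) : ‖(c : ℂ) * z ^ (t : ℂ)‖ = |c| * ‖z‖ ^ t := by
  rw [norm_mul, norm_real, Real.norm_eq_abs, norm_cpow_real]

theorem summable_ofReal_mul_cpow {c t : ℕ → ℝ} (hc : ∀ n, 0 ≤ c n)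
    (h : Summable fun n => c n * ‖z‖ ^ t n) : Summable fun n => (c n : ℂ) * z ^ (t n : ℂ) :=
  Summable.of_norm (by simpa only [norm_ofReal_mul_cpow, abs_of_nonneg (hc _)] using h)

theorem norm_tsum_ofReal_mul_cpow_le {c t : ℕ → ℝ} (hc : ∀ n, 0 ≤ c n)
    (h : Summable fun n => c n * ‖z‖ ^ t n) :
    ‖∑' n, (c n : ℂ) * z ^ (t n : ℂ)‖ ≤ ∑' n, c n * ‖z‖ ^ t n := by
  simpa only [norm_ofReal_mul_cpow, abs_of_nonneg (hc _)] using
    norm_tsum_le_tsum_norm (summable_ofReal_mul_cpow hc h).norm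

end RealExponentSeries

theorem tsum_mul_lt_of_tsum_mul_le {a b c : ℕ → ℝ} {s : ℝ} (ha : ∀ n, 0 ≤ a n)
    (hb : ∀ n, 0 ≤ b n) (hbc : ∀ n, b n < c n) (hc : Summable fun n => c n * a n)
    (hcs : ∑' n, c n * a n ≤ s) (hs : 0 < s) :
    Summable (fun n => b n * a n) ∧ ∑' n, b n * a n < s := by
  have hle : ∀ n, b n * a n ≤ c n * a n := fun n => mul_le_mul_of_nonneg_right (hbc n).le (ha n)
  have hba : Summable fun n => b n * a n :=
    hc.of_nonneg_of_le (fun n => mul_nonneg (hb n) (ha n)) hle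
  refine ⟨hba, ?_⟩
  by_cases hzero : ∀ n, a n = 0
  · simpa only [hzero, mul_zero, tsum_zero] using hs
  · obtain ⟨i, hi⟩ := not_forall.1 hzero
    refine lt_of_lt_of_le (hba.tsum_lt_tsum (i := i) hle ?_ hc) hcs
    exact mul_lt_mul_of_pos_right (hbc i) ((ha i).lt_of_ne' hi)

theorem rpow_lt_of_lt_iInf_rpow {ι : Type*} {c e : ι → ℝ} {r : ℝ} (hc : ∀ i, 0 ≤ c i)
    (he : ∀ i, 0 < e i) (hr : 0 ≤ r) (h : r < ⨅ i, c i ^ (1 / e i)) (i : ι) :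
    r ^ e i < c i := by
  have hri : r < c i ^ (1 / e i) :=
    h.trans_le (ciInf_le ⟨0, by rintro _ ⟨j, rfl⟩; exact Real.rpow_nonneg (hc j) _⟩ i)
  simpa only [← Real.rpow_mul (hc i), one_div_mul_cancel (he i).ne', Real.rpow_one] using
    Real.rpow_lt_rpow hr hri (he i)

noncomputable def negCoeffSeries (N a : ℕ → ℝ) (z : ℂ) : ℂ :=
  z - ∑' n, (a n : ℂ) * z ^ (N n : ℂ)

/-- Termwise derivative of `negCoeffSeries N a`. -/
noncomputable def negCoeffSeriesDeriv (N a : ℕ → ℝ) (z : ℂ) : ℂ :=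
  1 - ∑' n, ((N n * a n : ℝ) : ℂ) * z ^ ((N n - 1 : ℝ) : ℂ)

section NegCoeffSeries

variable {N a : ℕ → ℝ} {z : ℂ}

theorem negCoeffSeries_eq_mul (hz : z ≠ 0) :
    negCoeffSeries N a z = z * (1 - ∑' n, (a n : ℂ) * z ^ ((N n - 1 : ℝ) : ℂ)) := by
  rw [negCoeffSeries, mul_sub, mul_one, ← tsum_mul_left]
  congr 2 with n
  rw [ofReal_sub, ofReal_one, cpow_sub _ _ hz, cpow_one]
  field_simp

theorem negCoeffSeries_starlike {ψ : ℝ} (hψ : ψ < 1) (hN : ∀ n, 1 ≤ N n) (ha : ∀ n, 0 ≤ a n)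
    (hz : z ≠ 0) (hs : Summable fun n => (N n - ψ) * ‖z‖ ^ (N n - 1) * a n)
    (hlt : ∑' n, (N n - ψ) * ‖z‖ ^ (N n - 1) * a n < 1 - ψ) :
    negCoeffSeries N a z ≠ 0 ∧
      ψ < (z * negCoeffSeriesDeriv N a z / negCoeffSeries N a z).re := by
  have hρ : ∀ n, 0 ≤ ‖z‖ ^ (N n - 1) := fun n => Real.rpow_nonneg (norm_nonneg z) _
  have hN0 : ∀ n, 0 ≤ N n * a n := fun n => mul_nonneg (by linarith [hN n]) (ha n)
  have hN1 : ∀ n, 0 ≤ (N n - 1) * a n := fun n => mul_nonneg (by linarith [hN n]) (ha n)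
  have hp : Summable fun n => a n * ‖z‖ ^ (N n - 1) := by
    refine (hs.mul_left (1 - ψ)⁻¹).of_nonneg_of_le (fun n => mul_nonneg (ha n) (hρ n)) fun n => ?_
    rw [← div_eq_inv_mul, le_div_iff₀ (by linarith)]
    nlinarith [hN n, mul_nonneg (ha n) (hρ n)]
  have hq : Summable fun n => N n * a n * ‖z‖ ^ (N n - 1) :=
    (hs.add (hp.mul_left ψ)).congr fun n => by ring
  have hqp : Summable fun n => (N n - 1) * a n * ‖z‖ ^ (N n - 1) :=
    (hq.sub hp).congr fun n => by ring
  set P := ∑' n, (a n : ℂ) * z ^ ((N n - 1 : ℝ) : ℂ)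
  set Q := ∑' n, ((N n * a n : ℝ) : ℂ) * z ^ ((N n - 1 : ℝ) : ℂ)
  have hQP : Q - P = ∑' n, (((N n - 1) * a n : ℝ) : ℂ) * z ^ ((N n - 1 : ℝ) : ℂ) := by
    rw [← (summable_ofReal_mul_cpow hN0 hq).tsum_sub (summable_ofReal_mul_cpow ha hp)]
    congr 1 with n
    push_cast
    ring
  obtain ⟨hP1, hre⟩ := lt_re_div_of_norm_sub_le (Q := Q) hψ
    (norm_tsum_ofReal_mul_cpow_le ha hp)
    (by
      rw [hQP, ← hq.tsum_sub hp]
      exact (norm_tsum_ofReal_mul_cpow_le hN1 hqp).trans_eq (tsum_congr fun n => by ring))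
    (by
      rw [← hp.tsum_mul_left, ← hq.tsum_sub (hp.mul_left ψ)]
      exact (tsum_congr fun n => by ring).trans_lt hlt)
  have hF : negCoeffSeries N a z = z * (1 - P) := negCoeffSeries_eq_mul hz
  refine ⟨hF ▸ mul_ne_zero hz hP1, ?_⟩
  rwa [hF, negCoeffSeriesDeriv, mul_div_mul_left _ _ hz]

end NegCoeffSeries

theorem tsum_sub_mul_rpow_mul_lt {N a c : ℕ → ℝ} {r ψ : ℝ} (hψ : ψ < 1) (hN : ∀ n, 1 ≤ N n)
    (ha : ∀ n, 0 ≤ a n) (hr : 0 ≤ r) (hc : Summable fun n => c n * a n)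
    (hca : ∑' n, c n * a n ≤ 1) (hrc : ∀ n, r ^ (N n - 1) < c n * ((1 - ψ) / (N n - ψ))) :
    Summable (fun n => (N n - ψ) * r ^ (N n - 1) * a n) ∧
      ∑' n, (N n - ψ) * r ^ (N n - 1) * a n < 1 - ψ := by
  have hψ' : 0 < 1 - ψ := sub_pos.2 hψ
  refine tsum_mul_lt_of_tsum_mul_le (c := fun n => (1 - ψ) * c n) ha
    (fun n => mul_nonneg (by linarith [hN n]) (Real.rpow_nonneg hr _)) (fun n => ?_)
    (by simpa only [mul_assoc] using hc.mul_left (1 - ψ))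
    (by simpa only [mul_assoc, tsum_mul_left] using mul_le_of_le_one_right hψ'.le hca) hψ'
  have hNψ : 0 < N n - ψ := by linarith [hN n]
  calc (N n - ψ) * r ^ (N n - 1) < (N n - ψ) * (c n * ((1 - ψ) / (N n - ψ))) :=
        mul_lt_mul_of_pos_left (hrc n) hNψ
    _ = (1 - ψ) * c n := by field_simp

theorem Xi_nonneg {μ A B γ : ℝ} {k m : ℕ} {ϑ lam : ℕ → ℝ} {n : ℕ} (hBA : B < A) (hB0 : B < 0)
    (hγ1 : γ < 1) (hkm : m ≤ k) (hμn : 1 ≤ μ * n) (hlam : 0 ≤ lam n) (hϑ : lam n ≤ ϑ n) :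
    0 ≤ Xi μ A B γ k m ϑ lam n := by
  have hpow : (μ * n) ^ m * lam n ≤ (μ * n) ^ k * ϑ n :=
    mul_le_mul (pow_le_pow_right₀ hμn hkm) hϑ hlam (by positivity)
  unfold Xi
  have := mul_nonneg (mul_nonneg (sub_pos.2 hBA).le (sub_pos.2 hγ1).le)
    (mul_nonneg (by positivity : (0 : ℝ) ≤ (μ * n) ^ m) hlam)
  nlinarith

theorem stmt6_general (μ A B γ ψ : ℝ) (k m : ℕ) (a ϑ lam : ℕ → ℝ)
    (hμ : 1 ≤ μ) (hkm : m ≤ k)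
    (hBA : B < A) (hB0 : B < 0)
    (hγ1 : γ < 1) (hψ1 : ψ < 1)
    (ha : ∀ n, 2 ≤ n → 0 ≤ a n)
    (hlam : ∀ n, 2 ≤ n → 0 ≤ lam n) (hϑ : ∀ n, 2 ≤ n → lam n ≤ ϑ n)
    (hsum : Summable fun n : ℕ => Xi μ A B γ k m ϑ lam (n + 2) * a (n + 2))
    (hle : (∑' n : ℕ, Xi μ A B γ k m ϑ lam (n + 2) * a (n + 2)) ≤ (A - B) * (1 - γ)) :
    ∀ z : ℂ, ‖z‖ < 1 → (¬ ∃ x : ℝ, x ≤ 0 ∧ (x : ℂ) = z) →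
      0 < ‖z‖ →
      ‖z‖ <
        (⨅ n : ℕ, (Xi μ A B γ k m ϑ lam (n + 2) / ((A - B) * (1 - γ)) *
            ((1 - ψ) / (μ * (n + 2 : ℕ) - ψ))) ^ ((1 : ℝ) / (μ * (n + 2 : ℕ) - 1))) →
      Fneg μ a z ≠ 0 ∧ ψ < (z * Fder μ a z / Fneg μ a z).re := by
  intro z _ _ hz hzr
  have hC : 0 < (A - B) * (1 - γ) := mul_pos (sub_pos.2 hBA) (sub_pos.2 hγ1)
  have hN : ∀ n : ℕ, 2 ≤ μ * (n + 2 : ℕ) := fun n => by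
    push_cast
    nlinarith [n.cast_nonneg (α := ℝ)]
  have hXi : ∀ n : ℕ, 0 ≤ Xi μ A B γ k m ϑ lam (n + 2) / ((A - B) * (1 - γ)) := fun n =>
    div_nonneg (Xi_nonneg hBA hB0 hγ1 hkm (by linarith [hN n]) (hlam _ (by omega))
      (hϑ _ (by omega))) hC.le
  have hradius := rpow_lt_of_lt_iInf_rpow
    (fun n => mul_nonneg (hXi n) (div_nonneg (sub_pos.2 hψ1).le (by linarith [hN n])))
    (fun n => by linarith [hN n]) (norm_nonneg z) hzr
  obtain ⟨hs, hlt⟩ := tsum_sub_mul_rpow_mul_lt hψ1 (fun n => by linarith [hN n])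
    (fun n => ha (n + 2) (by omega)) (norm_nonneg z)
    (by simpa only [div_mul_eq_mul_div] using hsum.div_const ((A - B) * (1 - γ)))
    (by rwa [tsum_congr fun n => div_mul_eq_mul_div _ _ _, tsum_div_const, div_le_one hC])
    hradius
  -- `Fneg μ a` and `Fder μ a` unfold to `negCoeffSeries` and its derivative
  -- with `Nₙ = μ(n+2)` and coefficients `a (n+2)`.
  exact negCoeffSeries_starlike hψ1 (fun n => by linarith [hN n]) (fun n => ha (n + 2) (by omega))
    (norm_pos_iff.1 hz) hs hlt

/-- radius of starlikeness: if `Σ_{n≥2} Ξ(n)aₙ ≤ (A−B)(1−γ)` then, with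
`r₁ = inf_{n≥2} [(Ξ(n)/((A−B)(1−γ)))·(1−ψ)/(μn−ψ)]^{1/(μn−1)}`, the function `F_μ` is
starlike of order `ψ` for `0 < |z| < r₁` in the slit unit disk:
`F_μ(z) ≠ 0` and `Re(z F_μ′(z)/F_μ(z)) > ψ`. -/
theorem stmt6 (μ A B γ ψ : ℝ) (k m : ℕ) (a ϑ lam : ℕ → ℝ)
    (hμ : 1 ≤ μ) (hkm : m ≤ k)
    (hB : -1 ≤ B) (hBA : B < A) (hA : A ≤ 1) (hB0 : B < 0)
    (hγ0 : 0 ≤ γ) (hγ1 : γ < 1) (hψ0 : 0 ≤ ψ) (hψ1 : ψ < 1)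
    (ha : ∀ n, 2 ≤ n → 0 ≤ a n)
    (hlam : ∀ n, 2 ≤ n → 0 ≤ lam n) (hϑ : ∀ n, 2 ≤ n → lam n ≤ ϑ n)
    (hsum : Summable fun n : ℕ => Xi μ A B γ k m ϑ lam (n + 2) * a (n + 2))
    (hle : (∑' n : ℕ, Xi μ A B γ k m ϑ lam (n + 2) * a (n + 2)) ≤ (A - B) * (1 - γ)) :
    ∀ z : ℂ, ‖z‖ < 1 → (¬ ∃ x : ℝ, x ≤ 0 ∧ (x : ℂ) = z) →
      0 < ‖z‖ →
      ‖z‖ <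
        (⨅ n : ℕ, (Xi μ A B γ k m ϑ lam (n + 2) / ((A - B) * (1 - γ)) *
            ((1 - ψ) / (μ * (n + 2 : ℕ) - ψ))) ^ ((1 : ℝ) / (μ * (n + 2 : ℕ) - 1))) →
      Fneg μ a z ≠ 0 ∧ ψ < (z * Fder μ a z / Fneg μ a z).re :=
  stmt6_general μ A B γ ψ k m a ϑ lam hμ hkm hBA hB0 hγ1 hψ1 ha hlam hϑ hsum hle
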